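/- arXiv:0801.2531 — 4 statements merged into one kernel-verified Lean document; each statement's English description precedes it below -/
import Mathlib

section
/- The set of marginally cyclic unit vectors of H ⊗ H is a relatively open dense subset of the unit sphere S(H ⊗ H), and its complement has measure zero with respect to the unitarily invariant probability measure on the sphere. -/
/-!
Write `M ξ = of (curry ξ)` for the coefficient matrix of `ξ : n × n → ℂ`. Since
`(a ⊗ 1) ξ` has coefficient matrix `a * M ξ`, the vector `ξ` is marginally cyclic iff `M ξ` is
invertible. Nonvanishing of `det (M ξ)` is an open condition, and a dense one because
`M - t • 1` is invertible off the finite spectrum of `M`; rescaling carries density to the sphere.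

For the null set, average the invariant measure over the unitaries
`U (φ, θ) = D₂(θ) W D₁(φ)`, with `W` the reflection in the all-ones vector (no zero entries)
and `D₁, D₂` diagonal phases. By Fubini it suffices that for each `ξ ≠ 0` only a Lebesgue-null
set of `(φ, θ)` gives `det (M (U (φ, θ) ξ)) = 0`. The phases of `D₁` have distinct frequencies,
so every coordinate of `η = W D₁(φ) ξ` is a nonzero polynomial in `exp (i φ)` and, for all but
countably many `φ`, the diagonal of `M η` has no zero. `D₂(θ)` multiplies the off-diagonal
entries of `M η` by `exp (i θ)`, making `det (M (D₂(θ) η))` a polynomial in `exp (i θ)` with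
constant term `∏ η (i, i) ≠ 0`, so it vanishes for only countably many `θ`.
-/

open Matrix Kronecker MeasureTheory Function Polynomial Complex

section MarginalCyclicity

variable {R : Type*} [CommRing R] {n : Type*} [Fintype n] [DecidableEq n]

theorem kronecker_one_mulVec_eq_uncurry (a : Matrix n n R) (ξ : n × n → R) :
    (a ⊗ₖ (1 : Matrix n n R)) *ᵥ ξ = uncurry (a * of (curry ξ)) := by
  have := kronecker_mulVec_vec (1 : Matrix n n R) (of (curry ξ))ᵀ a
  rwa [Matrix.one_mul, ← transpose_mul] at this

theorem span_kronecker_one_mulVec_eq_top_iff (ξ : n × n → R) :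
    Submodule.span R {y | ∃ a : Matrix n n R, y = (a ⊗ₖ (1 : Matrix n n R)) *ᵥ ξ} = ⊤ ↔
      IsUnit (of (curry ξ)) := by
  let f : Matrix n n R →ₗ[R] n × n → R :=
    (LinearEquiv.curry R R n n).symm.toLinearMap ∘ₗ (ofLinearEquiv R).symm.toLinearMap ∘ₗ
      LinearMap.mulRight R (of (curry ξ))
  have hf : {y | ∃ a : Matrix n n R, y = (a ⊗ₖ (1 : Matrix n n R)) *ᵥ ξ} = Set.range f := by
    ext y
    simp only [Set.mem_ofPred_eq, Set.mem_range, kronecker_one_mulVec_eq_uncurry,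
      eq_comm (a := y)]
    rfl
  rw [hf, ← LinearMap.coe_range, Submodule.span_eq, LinearMap.range_eq_top]
  simp only [f, LinearMap.coe_comp, LinearEquiv.coe_coe, EquivLike.comp_surjective]
  constructor
  · intro h
    obtain ⟨a, ha⟩ := h 1
    exact IsUnit.of_mul_eq_one_right a ha
  · rintro ⟨u, hu⟩ b
    rw [← hu]
    exact ⟨b * u⁻¹.val, by simp [Matrix.mul_assoc]⟩

end MarginalCyclicity

theorem subset_closure_inter_of_dense_of_homogeneous {E : Type*} [TopologicalSpace E]
    [AddCommMonoid E] [Module ℝ E] [ContinuousSMul ℝ E] {G : Set E} (hG : Dense G)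
    (hG_smul : ∀ c : ℝ, 0 < c → ∀ x ∈ G, c • x ∈ G) {q : E → ℝ} (hq : Continuous q)
    (hq_smul : ∀ (c : ℝ) (x : E), q (c • x) = c ^ 2 * q x) :
    {x | q x = 1} ⊆ closure (G ∩ {x | q x = 1}) := by
  intro x hx
  let normalize : E → E := fun y => (√(q y))⁻¹ • y
  have hcont : ContinuousAt normalize x :=
    ((hq.sqrt.continuousAt).inv₀ (by simp [hx.out])).smul continuousAt_id
  have hfix : normalize x = x := by simp [normalize, hx.out]
  have hx_cl : x ∈ closure ({y | 0 < q y} ∩ G) :=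
    hG.open_subset_closure_inter (isOpen_lt continuous_const hq) (by simp [hx.out])
  rw [← hfix]
  refine closure_mono ?_ (mem_closure_image hcont hx_cl)
  rintro _ ⟨y, ⟨hy_pos, hyG⟩, rfl⟩
  refine ⟨hG_smul _ (by simpa using hy_pos) _ hyG, ?_⟩
  change q ((√(q y))⁻¹ • y) = 1
  rw [hq_smul, inv_pow, Real.sq_sqrt hy_pos.out.le, inv_mul_cancel₀ hy_pos.out.ne']

section Density

variable {n : Type*} [Fintype n] [DecidableEq n]

theorem dense_setOf_det_ne_zero {𝕜 : Type*} [NontriviallyNormedField 𝕜] :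
    Dense {A : Matrix n n 𝕜 | A.det ≠ 0} := by
  intro A
  let shift : 𝕜 → Matrix n n 𝕜 := fun t => A - algebraMap 𝕜 _ t
  have hcont : Continuous shift := continuous_const.sub (continuous_algebraMap 𝕜 _)
  have h0 : (0 : 𝕜) ∈ closure (spectrum 𝕜 A)ᶜ := by
    rw [Set.compl_eq_univ_sdiff, (dense_univ.sdiff_finite A.finite_spectrum).closure_eq]
    trivial
  have hA : shift 0 = A := by simp [shift]
  rw [← hA]
  refine closure_mono ?_ (mem_closure_image hcont.continuousAt h0)
  rintro _ ⟨t, ht, rfl⟩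
  rw [Set.mem_compl_iff, spectrum.mem_iff, not_not, IsUnit.sub_iff, isUnit_iff_isUnit_det,
    isUnit_iff_ne_zero] at ht
  exact ht

theorem dense_setOf_det_of_curry_ne_zero {𝕜 : Type*} [NontriviallyNormedField 𝕜] :
    Dense {ξ : n × n → 𝕜 | (of (curry ξ)).det ≠ 0} :=
  dense_setOf_det_ne_zero.preimage Homeomorph.piCurry.isOpenMap

theorem continuous_det_of_curry {R : Type*} [CommRing R] [TopologicalSpace R]
    [IsTopologicalRing R] : Continuous fun ξ : n × n → R => (of (curry ξ)).det :=
  Homeomorph.piCurry.continuous.matrix_det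

theorem setOf_sum_normSq_eq_one_subset_closure_det_ne_zero :
    {ξ : n × n → ℂ | ∑ x, normSq (ξ x) = 1} ⊆
      closure ({ξ | (of (curry ξ)).det ≠ 0} ∩ {ξ | ∑ x, normSq (ξ x) = 1}) := by
  refine subset_closure_inter_of_dense_of_homogeneous dense_setOf_det_of_curry_ne_zero
    (fun c hc ξ hξ => ?_) (by fun_prop) fun c ξ => ?_
  · have hsmul : of (curry (c • ξ)) = (c : ℂ) • of (curry ξ) := by ext; simp
    rw [Set.mem_ofPred_eq, hsmul, det_smul]
    exact mul_ne_zero (pow_ne_zero _ (ofReal_ne_zero.mpr hc.ne')) hξ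
  · simp [Finset.mul_sum, normSq_mul, sq]

end Density

theorem measure_eq_zero_of_map_eq_of_null_sections {X Q : Type*} [MeasurableSpace X]
    [MeasurableSpace Q] {μ : Measure X} [SFinite μ] (ν : Measure Q) [SFinite ν] [NeZero ν]
    {T : Q → X → X} (hT : Measurable (uncurry T)) (hμ : ∀ q, μ.map (T q) = μ) {N : Set X}
    (hN : MeasurableSet N) (hnull : ∀ x, ν {q | T q x ∈ N} = 0) : μ N = 0 := by
  have hE : MeasurableSet (uncurry T ⁻¹' N) := hN.preimage hT
  have hTq : ∀ q, μ (T q ⁻¹' N) = μ N := fun q => by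
    conv_rhs => rw [← hμ q]
    exact (Measure.map_apply (hT.comp measurable_prodMk_left) hN).symm
  have h_left : ν.prod μ (uncurry T ⁻¹' N) = ν Set.univ * μ N := by
    rw [Measure.prod_apply hE]
    change ∫⁻ q, μ (T q ⁻¹' N) ∂ν = _
    simp only [hTq, lintegral_const, mul_comm]
  have h_right : ν.prod μ (uncurry T ⁻¹' N) = 0 := by
    rw [Measure.prod_apply_symm hE]
    simp [Set.preimage, hnull]
  rw [h_right, eq_comm, mul_eq_zero] at h_left
  exact h_left.resolve_left (Measure.measure_univ_ne_zero.mpr (NeZero.ne ν))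

theorem countable_setOf_eval_exp_mul_I_eq_zero {P : ℂ[X]} (hP : P ≠ 0) :
    {θ : ℝ | P.eval (exp (θ * I)) = 0}.Countable :=
  (((P.finite_setOfPred_isRoot hP).countable.preimage_cexp).preimage
    (mul_left_injective₀ I_ne_zero)).preimage ofReal_injective

section Unitaries

variable {ι : Type*} [DecidableEq ι]

noncomputable def phaseDiagonal (w : ι → ℕ) (θ : ℝ) : Matrix ι ι ℂ :=
  diagonal fun x => exp (θ * I) ^ w x

theorem phaseDiagonal_mem_unitaryGroup [Fintype ι] (w : ι → ℕ) (θ : ℝ) :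
    phaseDiagonal w θ ∈ unitaryGroup ι ℂ := by
  rw [mem_unitaryGroup_iff, star_eq_conjTranspose, phaseDiagonal, diagonal_conjTranspose,
    diagonal_mul_diagonal, ← diagonal_one]
  congr 1
  funext x
  rw [Pi.star_apply, star_def, mul_conj, normSq_eq_norm_sq, norm_pow, norm_exp_ofReal_mul_I]
  simp

theorem continuous_phaseDiagonal (w : ι → ℕ) : Continuous (phaseDiagonal w) :=
  Continuous.matrix_diagonal (by fun_prop)

theorem phaseDiagonal_mulVec_apply [Fintype ι] (w : ι → ℕ) (θ : ℝ) (ξ : ι → ℂ) (x : ι) :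
    (phaseDiagonal w θ *ᵥ ξ) x = exp (θ * I) ^ w x * ξ x :=
  mulVec_diagonal _ _ _

variable [Fintype ι]

variable (ι) in
noncomputable def onesReflection : Matrix ι ι ℂ :=
  1 - (2 / Fintype.card ι : ℂ) • of fun _ _ => 1

theorem onesReflection_mem_unitaryGroup : onesReflection ι ∈ unitaryGroup ι ℂ := by
  set N : ℂ := (Fintype.card ι : ℂ)
  set J : Matrix ι ι ℂ := of fun _ _ => 1
  have hW : onesReflection ι = 1 - (2 / N) • J := rfl
  have hJ : J * J = N • J := by ext; simp [J, N, mul_apply]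
  have hc : 2 / N * (2 / N * N) = 2 / N + 2 / N := by
    rcases eq_or_ne N 0 with h | h
    · simp [h]
    · field_simp; ring
  have hstar : star (onesReflection ι) = onesReflection ι := by
    ext x y
    by_cases hxy : x = y <;> simp [onesReflection, one_apply, hxy, Ne.symm]
  rw [mem_unitaryGroup_iff, hstar, hW]
  simp only [sub_mul, mul_sub, Matrix.one_mul, Matrix.mul_one, Matrix.smul_mul, Matrix.mul_smul,
    hJ, smul_smul, hc, add_smul]
  abel

theorem onesReflection_apply_ne_zero (h : Fintype.card ι ≠ 2) (x y : ι) :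
    onesReflection ι x y ≠ 0 := by
  have hN : (Fintype.card ι : ℂ) ≠ 0 :=
    Nat.cast_ne_zero.mpr (Fintype.card_pos_iff.mpr ⟨x⟩).ne'
  rcases eq_or_ne x y with rfl | hxy
  · simp only [onesReflection, Matrix.sub_apply, one_apply_eq, Matrix.smul_apply, of_apply,
      smul_eq_mul, mul_one, sub_ne_zero]
    rw [ne_comm, ne_eq, div_eq_one_iff_eq hN]
    exact_mod_cast h.symm
  · simp [onesReflection, hxy, hN]

end Unitaries

theorem countable_setOf_mul_phaseDiagonal_mulVec_apply_eq_zero {ι : Type*} [Fintype ι]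
    [DecidableEq ι] {U : Matrix ι ι ℂ} {y : ι} (hU : ∀ x, U y x ≠ 0) {ξ : ι → ℂ}
    (hξ : ξ ≠ 0) :
    {θ : ℝ | ((U * phaseDiagonal (fun x => Fintype.equivFin ι x) θ) *ᵥ ξ) y = 0}.Countable := by
  obtain ⟨x₀, hx₀⟩ := Function.ne_iff.mp hξ
  let k : ι → ℕ := fun x => Fintype.equivFin ι x
  have hk : Injective k := Fin.val_injective.comp (Fintype.equivFin ι).injective
  let P : ℂ[X] := ∑ x, C (U y x * ξ x) * X ^ k x
  have hP : P.coeff (k x₀) = U y x₀ * ξ x₀ := by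
    simp only [P, finsetSum_coeff, coeff_C_mul_X_pow, hk.eq_iff, Finset.sum_ite_eq,
      Finset.mem_univ, if_true]
  refine (countable_setOf_eval_exp_mul_I_eq_zero (P := P) fun h => ?_).mono fun θ hθ => ?_
  · rw [h, coeff_zero] at hP
    exact mul_ne_zero (hU x₀) hx₀ hP.symm
  · change P.eval (exp (θ * I)) = 0
    rw [← hθ.out, ← mulVec_mulVec, funext (phaseDiagonal_mulVec_apply _ θ ξ)]
    simp only [P, eval_finsetSum, eval_mul, eval_C, eval_pow, eval_X, mulVec, dotProduct]
    exact Finset.sum_congr rfl fun x _ => by ring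

theorem countable_setOf_det_add_exp_smul_eq_zero {n : Type*} [Fintype n] [DecidableEq n]
    {A : Matrix n n ℂ} (hA : A.det ≠ 0) (B : Matrix n n ℂ) :
    {θ : ℝ | (A + exp (θ * I) • B).det = 0}.Countable := by
  let P : ℂ[X] := det ((X : ℂ[X]) • B.map C + A.map C)
  have hP : P ≠ 0 := fun h => hA <| by
    rw [← coeff_det_X_add_C_zero B A]
    exact congrArg (coeff · 0) h
  refine (countable_setOf_eval_exp_mul_I_eq_zero hP).mono fun θ hθ => ?_
  rw [Set.mem_ofPred_eq, ← hθ, ← coe_evalRingHom, RingHom.map_det, add_comm]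
  congr 1
  ext i j
  simp only [RingHom.mapMatrix_apply, map_apply, Matrix.add_apply, Matrix.smul_apply, smul_eq_mul,
    coe_evalRingHom, eval_add, eval_mul, eval_X, eval_C]

section Mixing

variable {n : Type*} [Fintype n] [DecidableEq n]

def offDiagonalIndicator : n × n → ℕ := fun p => if p.1 = p.2 then 0 else 1

theorem of_curry_phaseDiagonal_offDiagonalIndicator_mulVec (η : n × n → ℂ) (θ : ℝ) :
    of (curry (phaseDiagonal offDiagonalIndicator θ *ᵥ η)) =
      diagonal (of (curry η)).diag +
        exp (θ * I) • (of (curry η) - diagonal (of (curry η)).diag) := by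
  ext i j
  rcases eq_or_ne i j with rfl | hij
  · simp [phaseDiagonal_mulVec_apply, offDiagonalIndicator]
  · simp [phaseDiagonal_mulVec_apply, offDiagonalIndicator, hij]

noncomputable def mixingUnitary (q : ℝ × ℝ) : Matrix (n × n) (n × n) ℂ :=
  phaseDiagonal offDiagonalIndicator q.2 *
    (onesReflection (n × n) * phaseDiagonal (fun x => Fintype.equivFin (n × n) x) q.1)

theorem mixingUnitary_mem_unitaryGroup (q : ℝ × ℝ) :
    mixingUnitary q ∈ unitaryGroup (n × n) ℂ :=
  mul_mem (phaseDiagonal_mem_unitaryGroup _ _)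
    (mul_mem onesReflection_mem_unitaryGroup (phaseDiagonal_mem_unitaryGroup _ _))

theorem continuous_mixingUnitary : Continuous (mixingUnitary (n := n)) :=
  ((continuous_phaseDiagonal _).comp continuous_snd).matrix_mul
    (continuous_const.matrix_mul ((continuous_phaseDiagonal _).comp continuous_fst))

theorem volume_setOf_det_mixingUnitary_mulVec_eq_zero {ξ : n × n → ℂ} (hξ : ξ ≠ 0) :
    volume {q : ℝ × ℝ | (of (curry (mixingUnitary q *ᵥ ξ))).det = 0} = 0 := by
  have hcont : Continuous fun q : ℝ × ℝ => (of (curry (mixingUnitary q *ᵥ ξ))).det :=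
    continuous_det_of_curry.comp (continuous_mixingUnitary.matrix_mulVec continuous_const)
  rw [Measure.volume_eq_prod,
    Measure.measure_prod_null (isClosed_eq hcont continuous_const).measurableSet]
  have hcard : Fintype.card (n × n) ≠ 2 := fun h =>
    Nat.not_exists_sq (m := 1) (n := 2) (by norm_num) (by norm_num)
      ⟨Fintype.card n, by simpa using h⟩
  let bad := ⋃ i : n, {φ : ℝ | ((onesReflection (n × n) *
    phaseDiagonal (fun x => Fintype.equivFin (n × n) x) φ) *ᵥ ξ) (i, i) = 0}
  have hbad : bad.Countable := Set.countable_iUnion fun i =>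
    countable_setOf_mul_phaseDiagonal_mulVec_apply_eq_zero
      (onesReflection_apply_ne_zero hcard _) hξ
  filter_upwards [measure_eq_zero_iff_ae_notMem.mp (hbad.measure_zero volume)] with φ hφ
  set η := (onesReflection (n × n) *
    phaseDiagonal (fun x => Fintype.equivFin (n × n) x) φ) *ᵥ ξ
  have hη : (diagonal (of (curry η)).diag).det ≠ 0 := by
    rw [det_diagonal]
    exact Finset.prod_ne_zero_iff.mpr fun i _ h => hφ (Set.mem_iUnion.mpr ⟨i, h⟩)
  rw [Pi.zero_apply]
  refine measure_mono_null (fun θ hθ => ?_)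
    ((countable_setOf_det_add_exp_smul_eq_zero hη
      (of (curry η) - diagonal (of (curry η)).diag)).measure_zero volume)
  rw [Set.mem_ofPred_eq, ← of_curry_phaseDiagonal_offDiagonalIndicator_mulVec, mulVec_mulVec]
  exact hθ

theorem measure_setOf_det_eq_zero_of_unitary_invariant (μ : Measure (n × n → ℂ)) [SFinite μ]
    (hμ : ∀ U : unitaryGroup (n × n) ℂ,
      μ.map (fun ξ => (U : Matrix (n × n) (n × n) ℂ) *ᵥ ξ) = μ) :
    μ {ξ | ξ ≠ 0 ∧ (of (curry ξ)).det = 0} = 0 := by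
  refine measure_eq_zero_of_map_eq_of_null_sections (volume : Measure (ℝ × ℝ))
    (T := fun q ξ => mixingUnitary q *ᵥ ξ) ?_
    (fun q => hμ ⟨_, mixingUnitary_mem_unitaryGroup q⟩) ?_ fun ξ => ?_
  · exact ((continuous_mixingUnitary.comp continuous_fst).matrix_mulVec continuous_snd).measurable
  · exact isOpen_ne.measurableSet.inter
      (isClosed_eq continuous_det_of_curry continuous_const).measurableSet
  · rcases eq_or_ne ξ 0 with rfl | hξ
    · simp
    · exact measure_mono_null (fun q hq => hq.2)
        (volume_setOf_det_mixingUnitary_mulVec_eq_zero hξ)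

end Mixing

/-- The set of marginally cyclic unit vectors in `H ⊗ H` is
relatively open and dense in the unit sphere, and its complement in the sphere
has measure zero for the (unique) unitarily invariant probability measure. -/
theorem stmt5 (n : ℕ)
    (S : Set (Fin n × Fin n → ℂ))
    (hS : S = {ξ | ∑ x, Complex.normSq (ξ x) = 1})
    (MC : Set (Fin n × Fin n → ℂ))
    (hMC : MC = {ξ | Submodule.span ℂ {y : Fin n × Fin n → ℂ |
        ∃ a : Matrix (Fin n) (Fin n) ℂ,
          y = (a ⊗ₖ (1 : Matrix (Fin n) (Fin n) ℂ)).mulVec ξ} = ⊤}) :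
    (∃ G : Set (Fin n × Fin n → ℂ), IsOpen G ∧ MC ∩ S = G ∩ S) ∧
    S ⊆ closure (MC ∩ S) ∧
    ∀ μ : Measure (Fin n × Fin n → ℂ), IsProbabilityMeasure μ → μ S = 1 →
      (∀ U : Matrix.unitaryGroup (Fin n × Fin n) ℂ,
        μ.map (fun ξ => (U : Matrix (Fin n × Fin n) (Fin n × Fin n) ℂ).mulVec ξ) = μ) →
      μ (S \ MC) = 0 := by
  have hMC' : MC = {ξ | (of (curry ξ)).det ≠ 0} := by
    ext ξ
    rw [hMC, Set.mem_ofPred_eq, span_kronecker_one_mulVec_eq_top_iff, isUnit_iff_isUnit_det,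
      isUnit_iff_ne_zero]
    rfl
  subst hS hMC'
  refine ⟨⟨_, isOpen_ne_fun continuous_det_of_curry continuous_const, rfl⟩,
    setOf_sum_normSq_eq_one_subset_closure_det_ne_zero, fun μ _ _ hμ => ?_⟩
  refine measure_mono_null ?_ (measure_setOf_det_eq_zero_of_unitary_invariant μ hμ)
  rintro ξ ⟨hξS, hξMC⟩
  refine ⟨?_, not_not.mp hξMC⟩
  rintro rfl
  simp at hξS
end

section
/- Let H, K be finite-dimensional Hilbert spaces with 1 ≤ r ≤ dim H ≤ dim K. Then there exists an r-tuple (v_1, …, v_r) of operators in B(H,K) satisfying v_1*v_1 + ⋯ + v_r*v_r = 1_H such that {v_i* v_j : 1 ≤ i, j ≤ r} is a linearly independent subset of B(H). -/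
/-!
Take the Vandermonde columns `d j = (1, 2 ^ j, …, n ^ j)` for `j < r` and write the strictly
positive matrix `G = 1 + J` (`J` the all-ones matrix) as `G = a⋆ a`. The matrices
`w j = a * diagonal (d j)` have `(w i)⋆ * w j = vecMulVec (d i) (d j) ⊙ G`, and these are linearly
independent because the `d j` are and `G` has no zero entry. As `w 0 = a` is invertible,
`P = ∑ (w j)⋆ w j` is strictly positive, so `P = b⋆ b` with `b` invertible, and `u j = w j * b⁻¹`
satisfies `∑ (u j)⋆ u j = 1`, while `(u i)⋆ u j = (b⁻¹)⋆ ((w i)⋆ w j) b⁻¹` stays independent.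
An orthonormal basis of `H` carries this to `B(H)`, and an isometry `H → K` to `B(H, K)`.
-/

open ContinuousLinearMap Matrix

theorem LinearIndependent.mul_mul_of_isUnit {R A ι : Type*} [CommRing R] [Ring A] [Algebra R A]
    {f : ι → A} (hf : LinearIndependent R f) {a b : A} (ha : IsUnit a) (hb : IsUnit b) :
    LinearIndependent R fun i => a * f i * b :=
  hf.map' (LinearMap.mulLeftRight R (a, b)) <| LinearMap.ker_eq_bot.mpr fun _ _ hxy =>
    ha.mul_left_cancel (hb.mul_right_cancel hxy)

section CStarAlgebra

variable {A ι : Type*} [CStarAlgebra A] [PartialOrder A] [StarOrderedRing A] [Fintype ι]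

theorem isStrictlyPositive_sum_star_mul_self {w : ι → A} {i₀ : ι} (h : IsUnit (w i₀)) :
    IsStrictlyPositive (∑ i, star (w i) * w i) :=
  (CStarAlgebra.isStrictlyPositive_iff_eq_star_mul_self.mpr ⟨w i₀, h, rfl⟩).of_le <|
    Finset.single_le_sum (fun i _ => star_mul_self_nonneg (w i)) (Finset.mem_univ i₀)

theorem exists_sum_star_mul_self_eq_one_linearIndependent_of_isStrictlyPositive {w : ι → A}
    (hw : IsStrictlyPositive (∑ i, star (w i) * w i))
    (hind : LinearIndependent ℂ fun p : ι × ι => star (w p.1) * w p.2) :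
    ∃ u : ι → A, ∑ i, star (u i) * u i = 1 ∧
      LinearIndependent ℂ fun p : ι × ι => star (u p.1) * u p.2 := by
  obtain ⟨b, hb, hsum⟩ := CStarAlgebra.isStrictlyPositive_iff_eq_star_mul_self.mp hw
  lift b to Aˣ using hb
  have hconj : ∀ i j, star (w i * ↑b⁻¹) * (w j * ↑b⁻¹) =
      star (↑b⁻¹ : A) * (star (w i) * w j) * ↑b⁻¹ := by
    intro i j
    simp only [star_mul, mul_assoc]
  refine ⟨fun i => w i * ↑b⁻¹, ?_, ?_⟩
  · simp only [hconj, ← Finset.mul_sum, ← Finset.sum_mul, hsum]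
    rw [← mul_assoc, ← star_mul, Units.mul_inv, star_one, one_mul, Units.mul_inv]
  · simp only [hconj]
    exact hind.mul_mul_of_isUnit b⁻¹.isUnit.star b⁻¹.isUnit

end CStarAlgebra

theorem LinearIndependent.vecMulVec {K ι κ m n : Type*} [CommRing K] [Fintype ι] [Fintype κ]
    {f : ι → m → K} {g : κ → n → K} (hf : LinearIndependent K f) (hg : LinearIndependent K g) :
    LinearIndependent K fun p : ι × κ => vecMulVec (f p.1) (g p.2) := by
  rw [Fintype.linearIndependent_iff] at hf hg ⊢
  intro c hc p
  have hrow : ∀ i y, ∑ j, c (i, j) * g j y = 0 := by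
    intro i y
    refine hf (fun i => ∑ j, c (i, j) * g j y) (funext fun x => ?_) i
    have hxy := congrFun (congrFun hc x) y
    simp only [Fintype.sum_prod_type, Matrix.sum_apply, Matrix.smul_apply, vecMulVec_apply,
      smul_eq_mul, Matrix.zero_apply] at hxy
    simp only [Finset.sum_apply, Pi.smul_apply, smul_eq_mul, Finset.sum_mul, Pi.zero_apply]
    rw [← hxy]
    exact Finset.sum_congr rfl fun i _ => Finset.sum_congr rfl fun j _ => by ring
  exact hg (fun j => c (p.1, j)) (funext fun y => by simpa using hrow p.1 y) p.2

theorem LinearIndependent.hadamard_right {K ι m n : Type*} [Field K] {M : ι → Matrix m n K}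
    (hM : LinearIndependent K M) {G : Matrix m n K} (hG : ∀ i j, G i j ≠ 0) :
    LinearIndependent K fun i => M i ⊙ G :=
  hM.map'
    { toFun := (· ⊙ G)
      map_add' := fun _ _ => add_hadamard _ _ _
      map_smul' := fun _ _ => smul_hadamard _ _ _ } <|
    LinearMap.ker_eq_bot.mpr fun _ _ hXY => Matrix.ext fun i j =>
      mul_right_cancel₀ (hG i j) (congrFun (congrFun hXY i) j)

theorem Matrix.diagonal_mul_mul_diagonal {α n : Type*} [Fintype n] [DecidableEq n]
    [CommSemiring α] (a b : n → α) (G : Matrix n n α) :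
    diagonal a * G * diagonal b = vecMulVec a b ⊙ G := by
  ext i j
  simp only [mul_diagonal, diagonal_mul, hadamard_apply, vecMulVec_apply]
  ring

theorem Matrix.linearIndependent_vandermonde_col {K : Type*} [Field K] {n : ℕ} {v : Fin n → K}
    (hv : Function.Injective v) : LinearIndependent K (vandermonde v).col :=
  linearIndependent_cols_of_det_ne_zero (det_vandermonde_ne_zero_iff.mpr hv)

open scoped ComplexOrder MatrixOrder Matrix.Norms.L2Operator in
theorem Matrix.exists_sum_star_mul_self_eq_one_linearIndependent {r n : ℕ} (hr : 1 ≤ r)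
    (hrn : r ≤ n) :
    ∃ u : Fin r → Matrix (Fin n) (Fin n) ℂ, ∑ i, star (u i) * u i = 1 ∧
      LinearIndependent ℂ fun p : Fin r × Fin r => star (u p.1) * u p.2 := by
  let d : Fin r → Fin n → ℂ := (vandermonde fun k : Fin n => (k : ℂ) + 1).col ∘ Fin.castLE hrn
  have hd : LinearIndependent ℂ d :=
    (linearIndependent_vandermonde_col fun k l hkl => Fin.ext (by simpa using hkl)).comp _
      (Fin.castLE_injective hrn)
  have hd_apply : ∀ j k, d j k = ((k : ℂ) + 1) ^ (j : ℕ) := fun j k => rfl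
  have hd_star : ∀ j, star (d j) = d j := fun j => funext fun k => by simp [hd_apply]
  set G : Matrix (Fin n) (Fin n) ℂ := 1 + vecMulVec 1 1 with hG_def
  have hG_ne : ∀ k l, G k l ≠ 0 := by
    intro k l
    by_cases h : k = l <;> simp [hG_def, h]
  have hG : IsStrictlyPositive G := isStrictlyPositive_one.add_nonneg <|
    nonneg_iff_posSemidef.mpr (by simpa using posSemidef_vecMulVec_self_star (1 : Fin n → ℂ))
  obtain ⟨a, ha, hGa⟩ := CStarAlgebra.isStrictlyPositive_iff_eq_star_mul_self.mp hG
  refine exists_sum_star_mul_self_eq_one_linearIndependent_of_isStrictlyPositive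
    (w := fun j => a * diagonal (d j)) ?_ ?_
  · refine isStrictlyPositive_sum_star_mul_self (i₀ := ⟨0, hr⟩) ?_
    have hd_zero : d ⟨0, hr⟩ = 1 := funext fun k => by simp [hd_apply]
    simpa [hd_zero] using ha
  · have hgram : ∀ i j, star (a * diagonal (d i)) * (a * diagonal (d j)) =
        vecMulVec (d i) (d j) ⊙ G := by
      intro i j
      rw [star_mul, star_eq_conjTranspose, diagonal_conjTranspose, hd_star, mul_assoc,
        ← mul_assoc (star a), ← hGa, ← mul_assoc, diagonal_mul_mul_diagonal]
    simp only [hgram]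
    exact (hd.vecMulVec hd).hadamard_right hG_ne

theorem exists_adjoint_comp_self_eq_one {H K : Type*}
    [NormedAddCommGroup H] [InnerProductSpace ℂ H] [FiniteDimensional ℂ H]
    [NormedAddCommGroup K] [InnerProductSpace ℂ K] [FiniteDimensional ℂ K]
    (h : Module.finrank ℂ H ≤ Module.finrank ℂ K) : ∃ J : H →L[ℂ] K, adjoint J ∘L J = 1 := by
  let b := (stdOrthonormalBasis ℂ H).toBasis
  let w := stdOrthonormalBasis ℂ K ∘ Fin.castLE h
  have hb : Orthonormal ℂ b := by
    rw [OrthonormalBasis.coe_toBasis]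
    exact (stdOrthonormalBasis ℂ H).orthonormal
  have hw : Orthonormal ℂ (b.constr ℂ w ∘ b) := by
    rw [show b.constr ℂ w ∘ b = w from funext (b.constr_basis ℂ w)]
    exact (stdOrthonormalBasis ℂ K).orthonormal.comp _ (Fin.castLE_injective h)
  let J := (b.constr ℂ w).isometryOfOrthonormal hb hw
  exact ⟨J.toContinuousLinearMap, (norm_map_iff_adjoint_comp_self _).mp J.norm_map⟩

/-- If `1 ≤ r ≤ dim H ≤ dim K`, there is an r-tuple
`(v₁, …, v_r)` in B(H,K) with `Σ vᵢ*vᵢ = 1` such that the operators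
`vᵢ*vⱼ` are linearly independent in B(H). -/
theorem stmt7 {H K : Type*}
    [NormedAddCommGroup H] [InnerProductSpace ℂ H] [FiniteDimensional ℂ H]
    [NormedAddCommGroup K] [InnerProductSpace ℂ K] [FiniteDimensional ℂ K]
    (r : ℕ) (hr : 1 ≤ r) (hrn : r ≤ Module.finrank ℂ H)
    (hnm : Module.finrank ℂ H ≤ Module.finrank ℂ K) :
    ∃ v : Fin r → H →L[ℂ] K,
      (∑ i, (ContinuousLinearMap.adjoint (v i)) ∘L (v i)) = 1 ∧
      LinearIndependent ℂ fun p : Fin r × Fin r =>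
        (ContinuousLinearMap.adjoint (v p.1)) ∘L (v p.2) := by
  obtain ⟨u, hsum, hind⟩ := Matrix.exists_sum_star_mul_self_eq_one_linearIndependent hr hrn
  let Φ : Matrix (Fin (Module.finrank ℂ H)) (Fin (Module.finrank ℂ H)) ℂ ≃⋆ₐ[ℂ] (H →L[ℂ] H) :=
    toEuclideanCLM.trans (stdOrthonormalBasis ℂ H).repr.symm.conjStarAlgEquiv
  obtain ⟨J, hJ⟩ := exists_adjoint_comp_self_eq_one hnm
  have hgram : ∀ i j, adjoint (J ∘L Φ (u i)) ∘L (J ∘L Φ (u j)) = Φ (star (u i) * u j) := by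
    intro i j
    rw [adjoint_comp, comp_assoc, ← comp_assoc _ J, hJ, one_def, id_comp, map_mul, map_star,
      star_eq_adjoint, mul_def]
  refine ⟨fun i => J ∘L Φ (u i), ?_, ?_⟩
  · simp only [hgram, ← map_sum, hsum, map_one]
  · simp only [hgram]
    exact hind.map' Φ.toAlgEquiv.toLinearEquiv.toLinearMap Φ.toAlgEquiv.toLinearEquiv.ker
end

section
/- Let H_1, H_2 be finite-dimensional Hilbert spaces and let (v_1, …, v_r) and (v_1', …, v_r') be r-tuples of operators in B(H_2, H_1). If Σ_i v_i* x v_i = Σ_i v_i'* x v_i' for all x ∈ B(H_1), then there exists a unitary r × r matrix (λ_{ij}) with v_i' = Σ_j λ_{ij} v_j for all i; and conversely. -/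
/-!
On rank-one operators `x = ⟪b, ·⟫ a` the identity says exactly that the vectors
`(⟪b, vᵢ η⟫)ᵢ` and `(⟪b, v'ᵢ η⟫)ᵢ` of `ℂʳ`, indexed by `(η, b)`, have the same Gram matrix.
Two families with the same Gram matrix are related by a unitary of `ℂʳ` (the isometry between
their spans, extended to the whole space), and its matrix `λ` gives
`⟪b, v'ᵢ η⟫ = ∑ⱼ λᵢⱼ ⟪b, vⱼ η⟫`. The converse is the orthonormality of the columns of `λ`.
-/

open ContinuousLinearMap

open scoped InnerProductSpace

lemma LinearMap.exists_linearIsometry_range_of_norm_eq {𝕜 M E E' : Type*} [RCLike 𝕜]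
    [AddCommGroup M] [Module 𝕜 M] [NormedAddCommGroup E] [InnerProductSpace 𝕜 E]
    [NormedAddCommGroup E'] [NormedSpace 𝕜 E'] (F : M →ₗ[𝕜] E) (G : M →ₗ[𝕜] E')
    (h : ∀ x, ‖F x‖ = ‖G x‖) :
    ∃ L : LinearMap.range F →ₗᵢ[𝕜] E', ∀ x, L ⟨F x, LinearMap.mem_range_self F x⟩ = G x := by
  have hker : LinearMap.ker F ≤ LinearMap.ker G := fun x hx => by
    rw [LinearMap.mem_ker, ← norm_eq_zero, ← h, norm_eq_zero, ← LinearMap.mem_ker]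
    exact hx
  set L₀ := (LinearMap.ker F).liftQ G hker ∘ₗ F.quotKerEquivRange.symm.toLinearMap
  have hL₀ : ∀ x, L₀ ⟨F x, LinearMap.mem_range_self F x⟩ = G x := fun x => by
    simp [L₀, LinearMap.quotKerEquivRange_symm_apply_image]
  refine ⟨⟨L₀, ?_⟩, hL₀⟩
  rintro ⟨_, x, rfl⟩
  rw [hL₀, ← h]
  rfl

lemma exists_linearIsometryEquiv_of_inner_eq {𝕜 E ι : Type*} [RCLike 𝕜]
    [NormedAddCommGroup E] [InnerProductSpace 𝕜 E] [FiniteDimensional 𝕜 E]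
    (f g : ι → E) (h : ∀ p q, ⟪f p, f q⟫_𝕜 = ⟪g p, g q⟫_𝕜) :
    ∃ U : E ≃ₗᵢ[𝕜] E, ∀ p, U (f p) = g p := by
  classical
  set F := Finsupp.linearCombination 𝕜 f
  set G := Finsupp.linearCombination 𝕜 g
  have hFG : ∀ l, ‖F l‖ = ‖G l‖ := fun l => by
    simp only [@norm_eq_sqrt_re_inner 𝕜, F, G, Finsupp.linearCombination_apply, Finsupp.sum,
      sum_inner, inner_sum, inner_smul_left, inner_smul_right, h]
  obtain ⟨L, hL⟩ := F.exists_linearIsometry_range_of_norm_eq G hFG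
  refine ⟨L.extend.toLinearIsometryEquiv rfl, fun p => ?_⟩
  have := hL (Finsupp.single p 1)
  simp only [F, G, Finsupp.linearCombination_single, one_smul] at this
  rw [LinearIsometry.toLinearIsometryEquiv_apply, ← this, ← LinearIsometry.extend_apply]

lemma LinearIsometryEquiv.exists_mem_unitaryGroup_apply_eq_sum {𝕜 n : Type*} [RCLike 𝕜]
    [Fintype n] [DecidableEq n] (U : EuclideanSpace 𝕜 n ≃ₗᵢ[𝕜] EuclideanSpace 𝕜 n) :
    ∃ lam ∈ Matrix.unitaryGroup n 𝕜, ∀ x i, U x i = ∑ j, lam i j * x j := by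
  set b := EuclideanSpace.basisFun n 𝕜
  refine ⟨_, U.toMatrix_mem_unitaryGroup b b, fun x i => ?_⟩
  have := congrFun (LinearMap.toMatrix_mulVec_repr b.toBasis b.toBasis U.toLinearEquiv x) i
  simpa [b, Matrix.mulVec, dotProduct] using this.symm

lemma sum_adjoint_comp_comp_of_mem_unitaryGroup {𝕜 n H₁ H₂ : Type*} [RCLike 𝕜]
    [Fintype n] [DecidableEq n]
    [NormedAddCommGroup H₁] [InnerProductSpace 𝕜 H₁] [CompleteSpace H₁]
    [NormedAddCommGroup H₂] [InnerProductSpace 𝕜 H₂] [CompleteSpace H₂]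
    {lam : Matrix n n 𝕜} (hlam : lam ∈ Matrix.unitaryGroup n 𝕜)
    (v : n → H₂ →L[𝕜] H₁) (x : H₁ →L[𝕜] H₁) :
    ∑ i, adjoint (∑ j, lam i j • v j) ∘L (x ∘L ∑ k, lam i k • v k)
      = ∑ j, adjoint (v j) ∘L (x ∘L v j) := by
  have horth : ∀ j k, ∑ i, starRingEnd 𝕜 (lam i j) * lam i k = if j = k then 1 else 0 :=
    fun j k => by
      simpa [Matrix.mul_apply, Matrix.one_apply] using
        congrFun (congrFun (Matrix.mem_unitaryGroup_iff'.mp hlam) j) k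
  calc ∑ i, adjoint (∑ j, lam i j • v j) ∘L (x ∘L ∑ k, lam i k • v k)
      = ∑ k, ∑ j, (∑ i, starRingEnd 𝕜 (lam i j) * lam i k) • adjoint (v j) ∘L (x ∘L v k) := by
        simp only [map_sum, map_smulₛₗ, comp_finsetSum, finsetSum_comp, comp_smul, smul_comp,
          Finset.smul_sum, Finset.sum_smul, mul_smul]
        rw [Finset.sum_comm]
        refine Finset.sum_congr rfl fun k _ => ?_
        rw [Finset.sum_comm]
        simp only [smul_comm (lam _ k)]
    _ = ∑ j, adjoint (v j) ∘L (x ∘L v j) := by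
        simp [horth, ite_smul]

section MatrixCoeffs

variable {𝕜 n H₁ H₂ : Type*} [RCLike 𝕜] [Fintype n]
  [NormedAddCommGroup H₁] [InnerProductSpace 𝕜 H₁] [CompleteSpace H₁]
  [NormedAddCommGroup H₂] [InnerProductSpace 𝕜 H₂] [CompleteSpace H₂]

def matrixCoeffs (w : n → H₂ →L[𝕜] H₁) (p : H₂ × H₁) : EuclideanSpace 𝕜 n :=
  WithLp.toLp 2 fun i => ⟪p.2, w i p.1⟫_𝕜

lemma inner_matrixCoeffs (w : n → H₂ →L[𝕜] H₁) (ξ η : H₂) (a b : H₁) :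
    ⟪matrixCoeffs w (ξ, a), matrixCoeffs w (η, b)⟫_𝕜
      = ⟪ξ, (∑ i, adjoint (w i) ∘L ((innerSL 𝕜 b).smulRight a ∘L w i)) η⟫_𝕜 := by
  simp only [matrixCoeffs, PiLp.inner_apply, RCLike.inner_apply, inner_conj_symm, sum_apply,
    inner_sum, comp_apply, adjoint_inner_right, smulRight_apply, innerSL_apply_apply,
    inner_smul_right]

end MatrixCoeffs

/-- Two r-tuples of operators in B(H₂,H₁) implement the same
completely positive map `x ↦ Σ vᵢ* x vᵢ` iff they are related by a unitary
r×r matrix of scalars. (No linear independence is assumed.) -/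
theorem stmt9 {H₁ H₂ : Type*}
    [NormedAddCommGroup H₁] [InnerProductSpace ℂ H₁] [FiniteDimensional ℂ H₁]
    [NormedAddCommGroup H₂] [InnerProductSpace ℂ H₂] [FiniteDimensional ℂ H₂]
    (r : ℕ) (v v' : Fin r → H₂ →L[ℂ] H₁) :
    (∀ x : H₁ →L[ℂ] H₁,
        ∑ i, (ContinuousLinearMap.adjoint (v i)) ∘L (x ∘L v i)
          = ∑ i, (ContinuousLinearMap.adjoint (v' i)) ∘L (x ∘L v' i))
      ↔ ∃ lam : Matrix.unitaryGroup (Fin r) ℂ,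
          ∀ i, v' i = ∑ j, (lam : Matrix (Fin r) (Fin r) ℂ) i j • v j := by
  constructor
  · intro h
    obtain ⟨U, hU⟩ := exists_linearIsometryEquiv_of_inner_eq (matrixCoeffs v) (matrixCoeffs v')
      fun _ _ => by rw [inner_matrixCoeffs, inner_matrixCoeffs, h]
    obtain ⟨lam, hlam, hUlam⟩ := U.exists_mem_unitaryGroup_apply_eq_sum
    refine ⟨⟨lam, hlam⟩, fun i => ext fun η => ext_inner_left ℂ fun b => ?_⟩
    have := hUlam (matrixCoeffs v (η, b)) i
    rw [hU] at this
    simpa [matrixCoeffs, inner_sum, inner_smul_right] using this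
  · rintro ⟨⟨lam, hlam⟩, hv'⟩ x
    simp only [hv', sum_adjoint_comp_comp_of_mem_unitaryGroup hlam]
end

section
/- Let φ: B(K) → B(H) be a UCP map given by φ(x) = Σ_{i=1}^r v_i* x v_i, and suppose each v_i ∈ B(H,K) has rank at most 1. Then for every unit vector ξ ∈ H ⊗ H, the state ρ_ξ(a ⊗ b) = ⟨(φ(a) ⊗ b)ξ, ξ⟩ of B(K ⊗ H) is separable. -/
/-!
A Kraus operator of rank at most one is an outer product `v = η ζᵀ`, so `v* a v` is
`⟨a η, η⟩ ζ̄ ζᵀ`. Contracting the first leg of `ξ` with `ζ` turns `⟨(v* a v ⊗ b) ξ, ξ⟩` into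
`⟨a η, η⟩ ⟨b u, u⟩` for a vector `u`, so `ρ_ξ` is a sum of products of vector functionals.
Normalising each of them to a state gives a convex combination of product states, whose weights
add up to `ρ_ξ(1 ⊗ 1) = 1`.
-/

open Matrix Kronecker ComplexOrder

/-- A state of a matrix algebra: a positive unital linear functional. -/
def IsState (d : ℕ) (ω : Matrix (Fin d) (Fin d) ℂ →ₗ[ℂ] ℂ) : Prop :=
  (∀ a : Matrix (Fin d) (Fin d) ℂ, 0 ≤ ω (aᴴ * a)) ∧ ω 1 = 1

namespace Matrix

theorem exists_eq_vecMulVec_of_rank_le_one {K m n : Type*} [Field K] [Fintype n]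
    (M : Matrix m n K) (h : M.rank ≤ 1) : ∃ (u : m → K) (w : n → K), M = vecMulVec u w := by
  classical
  obtain ⟨u, hu⟩ : (LinearMap.range M.mulVecLin).IsPrincipal :=
    (Submodule.finrank_le_one_iff_isPrincipal _).1 h
  have hcol : ∀ y, ∃ c : K, c • u = M *ᵥ Pi.single y 1 := fun y => by
    rw [← Submodule.mem_span_singleton, ← hu]
    exact ⟨_, rfl⟩
  choose w hw using hcol
  refine ⟨u, w, ext fun x y => ?_⟩
  rw [vecMulVec_apply]
  simpa [mul_comm] using (congrFun (hw y) x).symm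

theorem sum_kronecker {ι l m n p α : Type*} [NonUnitalNonAssocSemiring α] (s : Finset ι)
    (A : ι → Matrix l m α) (B : Matrix n p α) : (∑ i ∈ s, A i) ⊗ₖ B = ∑ i ∈ s, A i ⊗ₖ B := by
  ext
  simp [Matrix.sum_apply, Finset.sum_mul]

end Matrix

section VectorState

variable {ι m n p : Type*} [Fintype m]

def vectorState (η : m → ℂ) : Matrix m m ℂ →ₗ[ℂ] ℂ where
  toFun a := star η ⬝ᵥ a *ᵥ η
  map_add' a b := by simp [add_mulVec, dotProduct_add]
  map_smul' c a := by simp [smul_mulVec, dotProduct_smul]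

@[simp]
theorem vectorState_apply (η : m → ℂ) (a : Matrix m m ℂ) :
    vectorState η a = star η ⬝ᵥ a *ᵥ η := rfl

theorem vectorState_conjTranspose_mul_self_nonneg (η : m → ℂ) (a : Matrix m m ℂ) :
    0 ≤ vectorState η (aᴴ * a) := by
  rw [vectorState_apply, ← mulVec_mulVec, dotProduct_mulVec, ← star_mulVec]
  exact dotProduct_star_self_nonneg _

theorem vectorState_one [DecidableEq m] (η : m → ℂ) :
    vectorState η 1 = ((∑ x, Complex.normSq (η x) : ℝ) : ℂ) := by
  simp [dotProduct, Complex.normSq_eq_conj_mul_self]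

theorem conjTranspose_vecMulVec_mul_mul_vecMulVec (η : m → ℂ) (ζ : n → ℂ) (a : Matrix m m ℂ) :
    (vecMulVec η ζ)ᴴ * a * vecMulVec η ζ = vectorState η a • vecMulVec (star ζ) ζ := by
  rw [conjTranspose_vecMulVec, vecMulVec_mul, vecMulVec_mul_vecMulVec, vecMulVec_smul,
    vectorState_apply, dotProduct_mulVec]

theorem star_dotProduct_vecMulVec_kronecker_mulVec [Fintype n] (ζ : m → ℂ) (b : Matrix n n ℂ)
    (ξ : m × n → ℂ) :
    star ξ ⬝ᵥ (vecMulVec (star ζ) ζ ⊗ₖ b) *ᵥ ξ = vectorState (ζ ᵥ* of (Function.curry ξ)) b := by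
  simp only [vectorState_apply, dotProduct, mulVec, vecMul, kroneckerMap_apply, vecMulVec_apply,
    Pi.star_apply, of_apply, Function.curry_apply, Fintype.sum_prod_type, star_sum, star_mul',
    Finset.sum_mul, Finset.mul_sum]
  rw [Finset.sum_comm]
  refine Finset.sum_congr rfl fun y _ => ?_
  rw [Finset.sum_comm_cycle]
  refine Finset.sum_congr rfl fun y' _ => ?_
  rw [Finset.sum_comm]
  exact Finset.sum_congr rfl fun x' _ => Finset.sum_congr rfl fun x _ => by ring

theorem star_dotProduct_kraus_kronecker_mulVec [Fintype ι] [Fintype n] [Fintype p]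
    (η : ι → m → ℂ) (ζ : ι → n → ℂ) (a : Matrix m m ℂ) (b : Matrix p p ℂ) (ξ : n × p → ℂ) :
    star ξ ⬝ᵥ ((∑ i, (vecMulVec (η i) (ζ i))ᴴ * a * vecMulVec (η i) (ζ i)) ⊗ₖ b) *ᵥ ξ
      = ∑ i, vectorState (η i) a * vectorState (ζ i ᵥ* of (Function.curry ξ)) b := by
  simp_rw [conjTranspose_vecMulVec_mul_mul_vecMulVec]
  rw [sum_kronecker, sum_mulVec, dotProduct_sum]
  refine Finset.sum_congr rfl fun i _ => ?_
  rw [smul_kronecker, smul_mulVec, dotProduct_smul, star_dotProduct_vecMulVec_kronecker_mulVec,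
    smul_eq_mul]

end VectorState

section States

variable {d : ℕ}

theorem isState_vectorState_single [NeZero d] : IsState d (vectorState (Pi.single 0 1)) :=
  ⟨vectorState_conjTranspose_mul_self_nonneg _, by simp⟩

theorem exists_isState_vectorState_eq_smul [NeZero d] (η : Fin d → ℂ) :
    ∃ ω, IsState d ω ∧ vectorState η = ((∑ x, Complex.normSq (η x) : ℝ) : ℂ) • ω := by
  by_cases hη : η = 0
  · exact ⟨_, isState_vectorState_single, by ext; simp [hη]⟩
  set S : ℂ := ((∑ x, Complex.normSq (η x) : ℝ) : ℂ)
  have hS : S ≠ 0 := by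
    rw [show S = vectorState η 1 from (vectorState_one η).symm, vectorState_apply, one_mulVec]
    exact mt dotProduct_star_self_eq_zero.1 hη
  refine ⟨S⁻¹ • vectorState η, ⟨fun a => ?_, ?_⟩, (smul_inv_smul₀ hS _).symm⟩
  · rw [LinearMap.smul_apply, smul_eq_mul]
    exact mul_nonneg (inv_nonneg.2 (Complex.zero_le_real.2
      (Finset.sum_nonneg fun x _ => Complex.normSq_nonneg (η x))))
      (vectorState_conjTranspose_mul_self_nonneg η a)
  · rw [LinearMap.smul_apply, vectorState_one, smul_eq_mul, inv_mul_cancel₀ hS]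

end States

-- A functional on `B(K ⊗ H)` is recorded through its values `ρ a b = ρ(a ⊗ b)` on elementary tensors.
def IsSeparableState (m n : ℕ) (ρ : Matrix (Fin m) (Fin m) ℂ → Matrix (Fin n) (Fin n) ℂ → ℂ) :
    Prop :=
  ∃ (N : ℕ) (t : Fin N → ℝ)
    (σ : Fin N → (Matrix (Fin m) (Fin m) ℂ →ₗ[ℂ] ℂ))
    (τ : Fin N → (Matrix (Fin n) (Fin n) ℂ →ₗ[ℂ] ℂ)),
    (∀ k, 0 ≤ t k) ∧ (∑ k, t k = 1) ∧
    (∀ k, IsState m (σ k)) ∧ (∀ k, IsState n (τ k)) ∧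
    ∀ a b, ρ a b = ∑ k, (t k : ℂ) * σ k a * τ k b

theorem isSeparableState_of_eq_sum_vectorState {m n r : ℕ} (η : Fin r → Fin m → ℂ)
    (u : Fin r → Fin n → ℂ) (ρ : Matrix (Fin m) (Fin m) ℂ → Matrix (Fin n) (Fin n) ℂ → ℂ)
    (hρ : ∀ a b, ρ a b = ∑ i, vectorState (η i) a * vectorState (u i) b) (hρ1 : ρ 1 1 = 1) :
    IsSeparableState m n ρ := by
  have : NeZero m := ⟨by rintro rfl; simp [hρ] at hρ1⟩
  have : NeZero n := ⟨by rintro rfl; simp [hρ] at hρ1⟩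
  choose σ hσ hησ using fun i => exists_isState_vectorState_eq_smul (η i)
  choose τ hτ huτ using fun i => exists_isState_vectorState_eq_smul (u i)
  have hprod : ∀ i a b, vectorState (η i) a * vectorState (u i) b =
      ((∑ x, Complex.normSq (η i x)) * ∑ y, Complex.normSq (u i y) : ℝ) * σ i a * τ i b := by
    intro i a b
    rw [hησ, huτ]
    push_cast
    simp only [LinearMap.smul_apply, smul_eq_mul]
    ring
  refine ⟨r, _, σ, τ, fun i => mul_nonneg (Finset.sum_nonneg fun x _ => Complex.normSq_nonneg _)
    (Finset.sum_nonneg fun x _ => Complex.normSq_nonneg _), ?_, hσ, hτ,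
    fun a b => (hρ a b).trans (Finset.sum_congr rfl fun i _ => hprod i a b)⟩
  have := (hρ 1 1).symm.trans hρ1
  simp only [vectorState_one] at this
  exact_mod_cast this

/-- If a UCP map `φ(x) = Σᵢ vᵢ* x vᵢ` has all Kraus operators of
rank at most 1, then for every unit vector ξ ∈ H ⊗ H, the state
`ρ_ξ(a ⊗ b) = ⟨(φ(a) ⊗ b)ξ, ξ⟩` of B(K ⊗ H) is separable. -/
theorem stmt19 (m n r : ℕ)
    (v : Fin r → Matrix (Fin m) (Fin n) ℂ)
    (hrank : ∀ i, (v i).rank ≤ 1)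
    (hsum : ∑ i, (v i)ᴴ * (v i) = 1)
    (φ : Matrix (Fin m) (Fin m) ℂ → Matrix (Fin n) (Fin n) ℂ)
    (hφ : ∀ x, φ x = ∑ i, (v i)ᴴ * x * (v i))
    (ξ : Fin n × Fin n → ℂ) (hξ : ∑ x, Complex.normSq (ξ x) = 1) :
    ∃ (N : ℕ) (t : Fin N → ℝ)
      (σ : Fin N → (Matrix (Fin m) (Fin m) ℂ →ₗ[ℂ] ℂ))
      (τ : Fin N → (Matrix (Fin n) (Fin n) ℂ →ₗ[ℂ] ℂ)),
      (∀ k, 0 ≤ t k) ∧ (∑ k, t k = 1) ∧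
      (∀ k, IsState m (σ k)) ∧ (∀ k, IsState n (τ k)) ∧
      ∀ (a : Matrix (Fin m) (Fin m) ℂ) (b : Matrix (Fin n) (Fin n) ℂ),
        star ξ ⬝ᵥ ((φ a ⊗ₖ b).mulVec ξ) = ∑ k, (t k : ℂ) * σ k a * τ k b := by
  choose η ζ hv using fun i => (v i).exists_eq_vecMulVec_of_rank_le_one (hrank i)
  obtain rfl : v = fun i => vecMulVec (η i) (ζ i) := funext hv
  have hφ1 : φ 1 = 1 := by simpa [hφ] using hsum
  refine isSeparableState_of_eq_sum_vectorState η (fun i => ζ i ᵥ* of (Function.curry ξ))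
    (fun a b => star ξ ⬝ᵥ (φ a ⊗ₖ b) *ᵥ ξ)
    (fun a b => by rw [hφ]; exact star_dotProduct_kraus_kronecker_mulVec η ζ a b ξ) ?_
  rw [hφ1, one_kronecker_one, ← vectorState_apply, vectorState_one, hξ, Complex.ofReal_one]
end
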